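/- arXiv:1912.05298 — 2 statements merged into one kernel-verified Lean document; each statement's English description precedes it below -/
import Mathlib

section
/- Let p(z) = 1 + c₁z + c₂z² + ⋯ be analytic on the unit disc with Re(p(z)) > 0, and let v ∈ ℝ. Then |c₂ - v c₁²| ≤ -4v + 2 if v ≤ 0; |c₂ - v c₁²| ≤ 2 if 0 ≤ v ≤ 1; and |c₂ - v c₁²| ≤ 4v - 2 if v ≥ 1. -/
/-!
The Cayley transform `ω = (P - 1) / (P + 1)` maps the unit disc to itself and fixes `0`, so by the
Schwarz lemma `ω z = z * g z` with `‖g‖ ≤ 1`. Differentiating `P - 1 = z * g * (P + 1)` twice at `0`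
gives `c₁ = 2 g(0)` and `c₂ - c₁² / 2 = 2 g'(0)`, and the Schwarz–Pick inequality
`‖g'(0)‖ ≤ 1 - ‖g(0)‖²` turns into `‖c₂ - c₁² / 2‖ ≤ 2 - ‖c₁‖² / 2`. Writing
`c₂ - v c₁² = (c₂ - c₁² / 2) + (1 / 2 - v) c₁²` and using `‖c₁‖ ≤ 2` gives the three bounds.
-/

open Metric Set Filter Topology ComplexConjugate

section DerivOfFactor

variable {𝕜 E : Type*} [NontriviallyNormedField 𝕜] [NormedAddCommGroup E] [NormedSpace 𝕜 E]
  {f h : 𝕜 → E} {x : 𝕜} {c : E}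

theorem deriv_eq_of_eventuallyEq_add_sub_smul (hh : DifferentiableAt 𝕜 h x)
    (hf : f =ᶠ[𝓝 x] fun y => c + (y - x) • h y) : deriv f x = h x := by
  rw [hf.deriv_eq]
  simpa using ((((hasDerivAt_id x).sub_const x).smul hh.hasDerivAt).const_add c).deriv

theorem deriv_deriv_eq_of_eventuallyEq_add_sub_smul [CompleteSpace E] (hh : AnalyticAt 𝕜 h x)
    (hf : f =ᶠ[𝓝 x] fun y => c + (y - x) • h y) : deriv (deriv f) x = (2 : 𝕜) • deriv h x := by
  have hderiv : deriv f =ᶠ[𝓝 x] fun y => (y - x) • deriv h y + h y := by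
    filter_upwards [hf.eventuallyEq_nhds, hh.eventually_analyticAt] with y hfy hy
    rw [hfy.deriv_eq]
    simpa using ((((hasDerivAt_id y).sub_const x).smul
      hy.differentiableAt.hasDerivAt).const_add c).deriv
  have hsum : HasDerivAt (fun y => (y - x) • deriv h y + h y) ((2 : 𝕜) • deriv h x) x := by
    convert (((hasDerivAt_id' x).sub_const x).fun_smul
      hh.deriv.differentiableAt.hasDerivAt).fun_add hh.differentiableAt.hasDerivAt using 1
    rw [two_smul]
    simp
  rw [hderiv.deriv_eq, hsum.deriv]

end DerivOfFactor

namespace Complex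

theorem sq_norm_one_sub_conj_mul_sub_sq_norm_sub (a w : ℂ) :
    ‖1 - conj a * w‖ ^ 2 - ‖w - a‖ ^ 2 = (1 - ‖a‖ ^ 2) * (1 - ‖w‖ ^ 2) := by
  simp only [← normSq_eq_norm_sq, normSq_apply, sub_re, sub_im, one_re, one_im, mul_re, mul_im,
    conj_re, conj_im]
  ring

theorem norm_sub_lt_norm_one_sub_conj_mul {a w : ℂ} (ha : ‖a‖ < 1) (hw : ‖w‖ < 1) :
    ‖w - a‖ < ‖1 - conj a * w‖ := by
  have hpos : 0 < (1 - ‖a‖ ^ 2) * (1 - ‖w‖ ^ 2) :=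
    mul_pos (by nlinarith [norm_nonneg a]) (by nlinarith [norm_nonneg w])
  rw [← sq_lt_sq₀ (norm_nonneg _) (norm_nonneg _)]
  linarith [sq_norm_one_sub_conj_mul_sub_sq_norm_sub a w]

theorem norm_sub_div_one_sub_conj_mul_lt_one {a w : ℂ} (ha : ‖a‖ < 1) (hw : ‖w‖ < 1) :
    ‖(w - a) / (1 - conj a * w)‖ < 1 := by
  have h := norm_sub_lt_norm_one_sub_conj_mul ha hw
  rw [norm_div, div_lt_one ((norm_nonneg _).trans_lt h)]
  exact h

theorem norm_deriv_le_one_sub_sq_of_mapsTo_ball {g : ℂ → ℂ}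
    (hd : DifferentiableOn ℂ g (ball 0 1)) (hg : MapsTo g (ball 0 1) (ball 0 1)) :
    ‖deriv g 0‖ ≤ 1 - ‖g 0‖ ^ 2 := by
  set a := g 0
  have h0 : (0 : ℂ) ∈ ball (0 : ℂ) 1 := mem_ball_self one_pos
  have hnorm : ∀ z ∈ ball (0 : ℂ) 1, ‖g z‖ < 1 := fun z hz => mem_ball_zero_iff.mp (hg hz)
  have ha : ‖a‖ < 1 := hnorm 0 h0
  have hden : ∀ z ∈ ball (0 : ℂ) 1, 1 - conj a * g z ≠ 0 := fun z hz =>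
    norm_pos_iff.mp ((norm_nonneg _).trans_lt (norm_sub_lt_norm_one_sub_conj_mul ha (hnorm z hz)))
  set m : ℂ → ℂ := fun z => (g z - a) / (1 - conj a * g z)
  have hmd : DifferentiableOn ℂ m (ball 0 1) :=
    (hd.sub_const a).div ((differentiableOn_const 1).sub (hd.const_mul _)) hden
  have hmaps : MapsTo m (ball 0 1) (closedBall (m 0) 1) := fun z hz => by
    simpa [m, a] using (norm_sub_div_one_sub_conj_mul_lt_one ha (hnorm z hz)).le
  have hD : 1 - conj a * a = ((1 - ‖a‖ ^ 2 : ℝ) : ℂ) := by simp [conj_mul']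
  have hDpos : 0 < 1 - ‖a‖ ^ 2 := by nlinarith [norm_nonneg a]
  have hg' := (hd.differentiableAt (isOpen_ball.mem_nhds h0)).hasDerivAt
  have hm' : HasDerivAt m (deriv g 0 / (1 - conj a * a)) 0 := by
    refine ((hg'.sub_const a).fun_div ((hg'.const_mul (conj a)).const_sub 1)
      (hden 0 h0)).congr_deriv ?_
    have hD0 : 1 - conj a * a ≠ 0 := hden 0 h0
    rw [show g 0 = a from rfl, sub_self, zero_mul, sub_zero]
    field_simp
  have hschwarz := norm_deriv_le_one_of_mapsTo_ball hmd hmaps one_pos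
  rwa [hm'.deriv, hD, norm_div, norm_real, Real.norm_of_nonneg hDpos.le,
    div_le_one hDpos] at hschwarz

theorem norm_deriv_le_one_sub_sq_of_mapsTo_closedBall {g : ℂ → ℂ}
    (hd : DifferentiableOn ℂ g (ball 0 1)) (hg : MapsTo g (ball 0 1) (closedBall 0 1)) :
    ‖deriv g 0‖ ≤ 1 - ‖g 0‖ ^ 2 := by
  by_cases hmax : ∃ z₀ ∈ ball (0 : ℂ) 1, ‖g z₀‖ = 1
  · obtain ⟨z₀, hz₀, hgz₀⟩ := hmax
    have hconst : EqOn g (fun _ => g z₀) (ball 0 1) :=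
      eqOn_of_isPreconnected_of_isMaxOn_norm (convex_ball 0 1).isPreconnected isOpen_ball hd hz₀
        fun z hz => by simpa [hgz₀] using hg hz
    have h0 : (0 : ℂ) ∈ ball (0 : ℂ) 1 := mem_ball_self one_pos
    rw [(eventuallyEq_of_mem (isOpen_ball.mem_nhds h0) hconst).deriv_eq, hconst h0, hgz₀]
    simp
  · push Not at hmax
    exact norm_deriv_le_one_sub_sq_of_mapsTo_ball hd fun z hz =>
      mem_ball_zero_iff.mpr ((mem_closedBall_zero_iff.mp (hg hz)).lt_of_ne (hmax z hz))

theorem norm_sub_one_lt_norm_add_one {w : ℂ} (hw : 0 < w.re) : ‖w - 1‖ < ‖w + 1‖ := by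
  rw [← sq_lt_sq₀ (norm_nonneg _) (norm_nonneg _), ← normSq_eq_norm_sq, ← normSq_eq_norm_sq,
    normSq_apply, normSq_apply]
  simp only [sub_re, sub_im, add_re, add_im, one_re, one_im]
  nlinarith

end Complex

theorem exists_eq_one_add_mul_of_re_pos {P : ℂ → ℂ} (hP : DifferentiableOn ℂ P (ball 0 1))
    (hP0 : P 0 = 1) (hre : ∀ z ∈ ball (0 : ℂ) 1, 0 < (P z).re) :
    ∃ g : ℂ → ℂ, DifferentiableOn ℂ g (ball 0 1) ∧ MapsTo g (ball 0 1) (closedBall 0 1) ∧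
      ∀ z ∈ ball (0 : ℂ) 1, P z = 1 + z * (g z * (P z + 1)) := by
  have hlt : ∀ z ∈ ball (0 : ℂ) 1, ‖P z - 1‖ < ‖P z + 1‖ := fun z hz =>
    Complex.norm_sub_one_lt_norm_add_one (hre z hz)
  have hne : ∀ z ∈ ball (0 : ℂ) 1, P z + 1 ≠ 0 := fun z hz =>
    norm_pos_iff.mp ((norm_nonneg _).trans_lt (hlt z hz))
  set ω : ℂ → ℂ := fun z => (P z - 1) / (P z + 1)
  have hωd : DifferentiableOn ℂ ω (ball 0 1) := (hP.sub_const 1).div (hP.add_const 1) hne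
  have hω0 : ω 0 = 0 := by simp [ω, hP0]
  have hωmaps : MapsTo ω (ball 0 1) (closedBall (ω 0) 1) := fun z hz => by
    rw [hω0, mem_closedBall_zero_iff, norm_div, div_le_one ((norm_nonneg _).trans_lt (hlt z hz))]
    exact (hlt z hz).le
  have hgd : DifferentiableOn ℂ (dslope ω 0) (ball 0 1) :=
    (Complex.differentiableOn_dslope (isOpen_ball.mem_nhds (mem_ball_self one_pos))).mpr hωd
  refine ⟨dslope ω 0, hgd, fun z hz => ?_, fun z hz => ?_⟩
  · simpa using Complex.norm_dslope_le_div_of_mapsTo_ball hωd hωmaps hz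
  · have hω : z * dslope ω 0 z = ω z := by simpa [hω0] using sub_smul_dslope ω 0 z
    rw [← mul_assoc, hω, div_mul_cancel₀ _ (hne z hz)]
    ring

theorem norm_iteratedDeriv_two_div_two_sub_le_of_re_pos {P : ℂ → ℂ}
    (hP : DifferentiableOn ℂ P (ball 0 1)) (hP0 : P 0 = 1)
    (hre : ∀ z ∈ ball (0 : ℂ) 1, 0 < (P z).re) :
    ‖iteratedDeriv 2 P 0 / 2 - deriv P 0 ^ 2 / 2‖ ≤ 2 - ‖deriv P 0‖ ^ 2 / 2 := by
  obtain ⟨g, hgd, hgmaps, hPg⟩ := exists_eq_one_add_mul_of_re_pos hP hP0 hre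
  have hball : ball (0 : ℂ) 1 ∈ 𝓝 0 := ball_mem_nhds 0 one_pos
  have hga : AnalyticAt ℂ g 0 := hgd.analyticAt hball
  have hPa : AnalyticAt ℂ P 0 := hP.analyticAt hball
  have hfactor : P =ᶠ[𝓝 0] fun z => 1 + (z - 0) • (g z * (P z + 1)) := by
    filter_upwards [hball] with z hz
    simpa using hPg z hz
  have hc₁ : deriv P 0 = 2 * g 0 := by
    rw [deriv_eq_of_eventuallyEq_add_sub_smul (h := fun z => g z * (P z + 1))
      (hga.differentiableAt.mul (hPa.differentiableAt.add_const 1)) hfactor, hP0]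
    ring
  have hc₂ : iteratedDeriv 2 P 0 = 2 * (2 * deriv g 0 + g 0 * deriv P 0) := by
    rw [iteratedDeriv_succ, iteratedDeriv_one,
      deriv_deriv_eq_of_eventuallyEq_add_sub_smul (h := fun z => g z * (P z + 1))
        (hga.mul (hPa.add analyticAt_const)) hfactor,
      deriv_fun_mul hga.differentiableAt (hPa.differentiableAt.add_const 1), deriv_add_const, hP0]
    simp only [smul_eq_mul]
    ring
  have hcoeff : iteratedDeriv 2 P 0 / 2 - deriv P 0 ^ 2 / 2 = 2 * deriv g 0 := by
    rw [hc₂, hc₁]; ring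
  rw [hcoeff, hc₁, norm_mul, norm_mul, Complex.norm_two]
  linarith [Complex.norm_deriv_le_one_sub_sq_of_mapsTo_closedBall hgd hgmaps]

theorem norm_sub_ofReal_mul_sq_le_max {a b : ℂ} (h : ‖b - a ^ 2 / 2‖ ≤ 2 - ‖a‖ ^ 2 / 2) (v : ℝ) :
    ‖b - v * a ^ 2‖ ≤ max 2 |4 * v - 2| := by
  have ha : ‖a‖ ^ 2 ≤ 4 := by linarith [norm_nonneg (b - a ^ 2 / 2)]
  have hsplit : b - v * a ^ 2 = (b - a ^ 2 / 2) + ((1 / 2 - v : ℝ) : ℂ) * a ^ 2 := by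
    push_cast; ring
  have htri : ‖b - v * a ^ 2‖ ≤ 2 - ‖a‖ ^ 2 / 2 + |1 / 2 - v| * ‖a‖ ^ 2 := by
    rw [hsplit]
    refine (norm_add_le _ _).trans ?_
    rw [norm_mul, Complex.norm_real, Real.norm_eq_abs, norm_pow]
    linarith
  have habs : |4 * v - 2| = 4 * |1 / 2 - v| := by
    rw [show 4 * v - 2 = -4 * (1 / 2 - v) by ring, abs_mul]
    norm_num
  rcases le_total |1 / 2 - v| (1 / 2) with hv | hv
  · exact le_max_of_le_left (by nlinarith [sq_nonneg ‖a‖])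
  · exact le_max_of_le_right (by rw [habs]; nlinarith [sq_nonneg ‖a‖])

theorem ma_minda_lemma (P : ℂ → ℂ) (hP : AnalyticOn ℂ P (ball 0 1))
    (hP0 : P 0 = 1) (hre : ∀ z ∈ ball (0 : ℂ) 1, 0 < (P z).re)
    (c₁ c₂ : ℂ) (hc₁ : c₁ = deriv P 0) (hc₂ : c₂ = iteratedDeriv 2 P 0 / 2)
    (v : ℝ) :
    (v ≤ 0 → ‖c₂ - (v : ℂ) * c₁ ^ 2‖ ≤ -4 * v + 2) ∧
    (0 ≤ v → v ≤ 1 → ‖c₂ - (v : ℂ) * c₁ ^ 2‖ ≤ 2) ∧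
    (1 ≤ v → ‖c₂ - (v : ℂ) * c₁ ^ 2‖ ≤ 4 * v - 2) := by
  subst hc₁ hc₂
  have key := norm_sub_ofReal_mul_sq_le_max
    (norm_iteratedDeriv_two_div_two_sub_le_of_re_pos hP.differentiableOn hP0 hre) v
  refine ⟨fun hv => ?_, fun hv₀ hv₁ => ?_, fun hv => ?_⟩ <;>
    exact key.trans (max_le (by linarith) (abs_le.mpr ⟨by linarith, by linarith⟩))
end

section
/- Let p(z) = 1 + c₁z + c₂z² + ⋯ be analytic on the unit disc with Re(p(z)) > 0, and let 1/2 ≤ v < 1. Then |c₂ - v c₁²| + (1 - v)|c₁|² ≤ 2. -/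
/-!
The Cayley transform `ω = (P - 1) / (P + 1)` maps the disc into itself and vanishes at `0`, so
`ω z = z g z` with `g = dslope P 0 / (P + 1)`, and the Schwarz lemma bounds `g` by `1`. Schwarz–Pick
at the origin, `‖g' 0‖ ≤ 1 - ‖g 0‖²`, with `g 0 = c₁ / 2` and `g' 0 = (c₂ - c₁² / 2) / 2` gives
`‖c₂ - c₁² / 2‖ ≤ 2 - ‖c₁‖² / 2`. Since `v - 1/2 ≥ 0`, the triangle inequality for
`c₂ - v c₁² = (c₂ - c₁² / 2) - (v - 1/2) c₁²` finishes the proof.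
-/

open Metric Set Complex ComplexConjugate

theorem AnalyticAt.deriv_dslope_same {𝕜 E : Type*} [NontriviallyNormedField 𝕜]
    [NormedAddCommGroup E] [NormedSpace 𝕜 E] [CompleteSpace E] {f : 𝕜 → E} {c : 𝕜}
    (hf : AnalyticAt 𝕜 f c) : (2 : 𝕜) • deriv (dslope f c) c = iteratedDeriv 2 f c := by
  obtain ⟨p, r, hp⟩ := hf
  rw [hp.hasFPowerSeriesAt.has_fpower_series_dslope_fslope.deriv, iteratedDeriv_eq_iteratedFDeriv,
    ← hp.factorial_smul]
  show (2 : 𝕜) • p.fslope.coeff 1 = _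
  rw [FormalMultilinearSeries.coeff_fslope, ofNat_smul_eq_nsmul]
  rfl

theorem Complex.add_one_ne_zero_of_re_pos {w : ℂ} (hw : 0 < w.re) : w + 1 ≠ 0 := fun h ↦ by
  have := congrArg re h
  simp only [add_re, one_re, zero_re] at this
  linarith

theorem Complex.norm_sub_one_div_add_one_lt_one {w : ℂ} (hw : 0 < w.re) :
    ‖(w - 1) / (w + 1)‖ < 1 := by
  rw [norm_div, div_lt_one (norm_pos_iff.2 (add_one_ne_zero_of_re_pos hw)),
    ← sq_lt_sq₀ (norm_nonneg _) (norm_nonneg _), ← normSq_eq_norm_sq, ← normSq_eq_norm_sq,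
    ← sub_pos]
  convert mul_pos four_pos hw using 1
  simp only [normSq_apply, add_re, add_im, sub_re, sub_im, one_re, one_im]
  ring

theorem Complex.normSq_one_sub_conj_mul_sub_normSq_sub (a w : ℂ) :
    normSq (1 - conj a * w) - normSq (w - a) = (1 - normSq a) * (1 - normSq w) := by
  simp only [normSq_apply, sub_re, sub_im, mul_re, mul_im, one_re, one_im, conj_re, conj_im]
  ring

theorem Complex.one_sub_conj_mul_ne_zero {a w : ℂ} (ha : ‖a‖ < 1) (hw : ‖w‖ ≤ 1) :
    1 - conj a * w ≠ 0 := by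
  have : ‖conj a * w‖ < 1 := by
    rw [norm_mul, RCLike.norm_conj]
    nlinarith [norm_nonneg a, norm_nonneg w]
  intro h
  rw [← eq_of_sub_eq_zero h, norm_one] at this
  exact this.false

theorem Complex.norm_sub_div_one_sub_conj_mul_le_one {a w : ℂ} (ha : ‖a‖ < 1) (hw : ‖w‖ ≤ 1) :
    ‖(w - a) / (1 - conj a * w)‖ ≤ 1 := by
  rw [norm_div, div_le_one (norm_pos_iff.2 (one_sub_conj_mul_ne_zero ha hw)),
    ← sq_le_sq₀ (norm_nonneg _) (norm_nonneg _), ← normSq_eq_norm_sq, ← normSq_eq_norm_sq,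
    ← sub_nonneg, normSq_one_sub_conj_mul_sub_normSq_sub, normSq_eq_norm_sq, normSq_eq_norm_sq]
  exact mul_nonneg (by nlinarith [norm_nonneg a]) (by nlinarith [norm_nonneg w])

theorem Complex.hasDerivAt_sub_div_one_sub_conj_mul {a : ℂ} (ha : ‖a‖ < 1) :
    HasDerivAt (fun w ↦ (w - a) / (1 - conj a * w)) (1 / (1 - ‖a‖ ^ 2 : ℝ)) a := by
  have hne := one_sub_conj_mul_ne_zero ha ha.le
  refine (((hasDerivAt_id a).sub_const a).div
    (((hasDerivAt_id a).const_mul (conj a)).const_sub 1) hne).congr_deriv ?_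
  rw [ofReal_sub, ofReal_one, ofReal_pow, ← conj_mul']
  simp only [id]
  field_simp
  ring

theorem Complex.norm_deriv_le_one_sub_sq {g : ℂ → ℂ} (hg : DifferentiableOn ℂ g (ball 0 1))
    (hmaps : MapsTo g (ball 0 1) (closedBall 0 1)) : ‖deriv g 0‖ ≤ 1 - ‖g 0‖ ^ 2 := by
  have h0 : (0 : ℂ) ∈ ball 0 1 := mem_ball_self one_pos
  rcases (mem_closedBall_zero_iff.1 (hmaps h0)).lt_or_eq with ha | ha
  · -- Schwarz lemma for the composition with the disc automorphism moving `g 0` to `0`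
    set a := g 0
    set φ : ℂ → ℂ := fun w ↦ (w - a) / (1 - conj a * w)
    have hφ : MapsTo φ (closedBall 0 1) (closedBall 0 1) := fun w hw ↦ mem_closedBall_zero_iff.2 <|
      norm_sub_div_one_sub_conj_mul_le_one ha (mem_closedBall_zero_iff.1 hw)
    have hφd : DifferentiableOn ℂ φ (closedBall 0 1) := fun w hw ↦
      ((differentiableAt_id.sub_const a).div ((differentiableAt_id.const_mul _).const_sub 1)
        (one_sub_conj_mul_ne_zero ha (mem_closedBall_zero_iff.1 hw))).differentiableWithinAt
    have hφa : φ a = 0 := by simp [φ]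
    have hschwarz := norm_deriv_le_div_of_mapsTo_ball (hφd.comp hg hmaps)
      (by rw [Function.comp_apply, hφa]; exact hφ.comp hmaps) one_pos
    have hgd : HasDerivAt g (deriv g 0) 0 :=
      (hg.differentiableAt (isOpen_ball.mem_nhds h0)).hasDerivAt
    rw [((hasDerivAt_sub_div_one_sub_conj_mul ha).comp 0 hgd).deriv, norm_mul, norm_div,
      norm_one, norm_real, Real.norm_of_nonneg (by nlinarith [norm_nonneg a])] at hschwarz
    have : 0 < 1 - ‖a‖ ^ 2 := by nlinarith [norm_nonneg a]
    rw [div_one, one_div_mul_eq_div, div_le_one this] at hschwarz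
    exact hschwarz
  · -- `‖g‖` attains its maximum at `0`, so `g` is constant
    have hmax : IsMaxOn (norm ∘ g) (ball 0 1) 0 := fun z hz ↦ by
      simpa [ha] using hmaps hz
    have hconst := eqOn_of_isPreconnected_of_isMaxOn_norm (convex_ball (0 : ℂ) 1).isPreconnected
      isOpen_ball hg h0 hmax
    rw [(hconst.eventuallyEq_of_mem (isOpen_ball.mem_nhds h0)).deriv_eq,
      show deriv (Function.const ℂ (g 0)) 0 = 0 from deriv_const 0 (g 0), ha]
    norm_num

theorem Complex.mapsTo_closedBall_of_norm_mul_lt_one {g : ℂ → ℂ}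
    (hg : DifferentiableOn ℂ g (ball 0 1)) (h : ∀ z ∈ ball (0 : ℂ) 1, ‖z * g z‖ < 1) :
    MapsTo g (ball 0 1) (closedBall 0 1) := by
  set ω : ℂ → ℂ := fun z ↦ (z - 0) • g z
  have hω : MapsTo ω (ball 0 1) (closedBall (ω 0) 1) :=
    fun w hw ↦ by simpa [ω] using (h w hw).le
  have hdslope : EqOn (dslope ω 0) g (ball 0 1) := by
    intro z hz
    rcases eq_or_ne z 0 with rfl | hz0
    · have hgd := (hg.differentiableAt (isOpen_ball.mem_nhds hz)).hasDerivAt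
      rw [dslope_same]
      exact (((hasDerivAt_id (0 : ℂ)).sub_const 0).smul hgd).deriv.trans (by simp)
    · exact dslope_sub_smul_of_ne g hz0
  intro z hz
  rw [mem_closedBall_zero_iff, ← hdslope hz, ← div_one 1]
  exact norm_dslope_le_div_of_mapsTo_ball ((differentiableOn_id.sub_const 0).smul hg) hω hz

theorem Complex.norm_iteratedDeriv_two_half_sub_le_of_re_pos {P : ℂ → ℂ}
    (hP : AnalyticOn ℂ P (ball 0 1)) (hP0 : P 0 = 1)
    (hre : ∀ z ∈ ball (0 : ℂ) 1, 0 < (P z).re) :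
    ‖iteratedDeriv 2 P 0 / 2 - deriv P 0 ^ 2 / 2‖ ≤ 2 - ‖deriv P 0‖ ^ 2 / 2 := by
  have h0 : (0 : ℂ) ∈ ball 0 1 := mem_ball_self one_pos
  have hPd : DifferentiableOn ℂ P (ball 0 1) := hP.differentiableOn
  have hne : ∀ z ∈ ball (0 : ℂ) 1, P z + 1 ≠ 0 := fun z hz ↦ add_one_ne_zero_of_re_pos (hre z hz)
  set q := dslope P 0
  have hqd : DifferentiableOn ℂ q (ball 0 1) :=
    (differentiableOn_dslope (isOpen_ball.mem_nhds h0)).2 hPd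
  set g : ℂ → ℂ := fun z ↦ q z / (P z + 1)
  have hg : DifferentiableOn ℂ g (ball 0 1) := hqd.div (hPd.add_const 1) hne
  have hcayley (z : ℂ) : z * g z = (P z - 1) / (P z + 1) := by
    simpa [hP0, mul_div_assoc] using congrArg (· / (P z + 1)) (sub_smul_dslope P 0 z)
  have hschwarzPick := norm_deriv_le_one_sub_sq hg <| mapsTo_closedBall_of_norm_mul_lt_one hg
    fun z hz ↦ (hcayley z).symm ▸ norm_sub_one_div_add_one_lt_one (hre z hz)
  have hq : HasDerivAt q (iteratedDeriv 2 P 0 / 2) 0 := by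
    have hPa : AnalyticAt ℂ P 0 := hP.analyticAt (isOpen_ball.mem_nhds h0)
    rw [← hPa.deriv_dslope_same, smul_eq_mul, mul_div_cancel_left₀ _ two_ne_zero]
    exact (hqd.differentiableAt (isOpen_ball.mem_nhds h0)).hasDerivAt
  have hP' : HasDerivAt P (deriv P 0) 0 :=
    (hPd.differentiableAt (isOpen_ball.mem_nhds h0)).hasDerivAt
  rw [(hq.fun_div (hP'.add_const 1) (hne 0 h0)).deriv] at hschwarzPick
  simp only [g, q, dslope_same, hP0, one_add_one_eq_two] at hschwarzPick
  rw [show (iteratedDeriv 2 P 0 / 2 * 2 - deriv P 0 * deriv P 0) / 2 ^ 2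
      = (iteratedDeriv 2 P 0 / 2 - deriv P 0 ^ 2 / 2) / 2 by ring,
    norm_div, norm_div, Complex.norm_two, div_pow] at hschwarzPick
  linarith

theorem ma_minda_refined_right_general (P : ℂ → ℂ) (hP : AnalyticOn ℂ P (ball 0 1))
    (hP0 : P 0 = 1) (hre : ∀ z ∈ ball (0 : ℂ) 1, 0 < (P z).re)
    (c₁ c₂ : ℂ) (hc₁ : c₁ = deriv P 0) (hc₂ : c₂ = iteratedDeriv 2 P 0 / 2)
    (v : ℝ) (hv0 : 1 / 2 ≤ v) :
    ‖c₂ - (v : ℂ) * c₁ ^ 2‖ + (1 - v) * ‖c₁‖ ^ 2 ≤ 2 := by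
  have hcoeff := norm_iteratedDeriv_two_half_sub_le_of_re_pos hP hP0 hre
  rw [← hc₁, ← hc₂] at hcoeff
  have htriangle : ‖c₂ - (v : ℂ) * c₁ ^ 2‖ ≤ ‖c₂ - c₁ ^ 2 / 2‖ + (v - 1 / 2) * ‖c₁‖ ^ 2 :=
    calc ‖c₂ - (v : ℂ) * c₁ ^ 2‖ = ‖(c₂ - c₁ ^ 2 / 2) - ((v - 1 / 2 : ℝ) : ℂ) * c₁ ^ 2‖ := by
          congr 1; push_cast; ring
      _ ≤ ‖c₂ - c₁ ^ 2 / 2‖ + ‖((v - 1 / 2 : ℝ) : ℂ) * c₁ ^ 2‖ := norm_sub_le _ _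
      _ = ‖c₂ - c₁ ^ 2 / 2‖ + (v - 1 / 2) * ‖c₁‖ ^ 2 := by
          rw [norm_mul, norm_real, Real.norm_of_nonneg (by linarith), norm_pow]
  linarith

theorem ma_minda_refined_right (P : ℂ → ℂ) (hP : AnalyticOn ℂ P (ball 0 1))
    (hP0 : P 0 = 1) (hre : ∀ z ∈ ball (0 : ℂ) 1, 0 < (P z).re)
    (c₁ c₂ : ℂ) (hc₁ : c₁ = deriv P 0) (hc₂ : c₂ = iteratedDeriv 2 P 0 / 2)
    (v : ℝ) (hv0 : 1 / 2 ≤ v) (hv : v < 1) :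
    ‖c₂ - (v : ℂ) * c₁ ^ 2‖ + (1 - v) * ‖c₁‖ ^ 2 ≤ 2 :=
  ma_minda_refined_right_general P hP hP0 hre c₁ c₂ hc₁ hc₂ v hv0
end
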